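/- The shortest twisted geodesics of Tetra and of Didi have length 1/2: for every γ ∈ Γ_T that is not a translation and every p ∈ ℝ³, the distance from p to γ(p) is at least 1/2, and likewise for every non-translation γ ∈ Γ_D and every p ∈ ℝ³; moreover equality is attained in both cases, since dist(0, τ(0)) = 1/2 and dist(0, ρ_x(0)) = 1/2. -/
import Mathlib


noncomputable section

/-- Points of `ℝ³`, written as `(x, y, z)`. -/
abbrev R3 : Type := ℝ × ℝ × ℝ

/-- The translation `T_w : x ↦ x + w` of `ℝ³`, as a bijection (it is an isometry). -/
def transl (w : R3) : Equiv.Perm R3 := Equiv.addRight w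

/-- The quarter-turn screw motion `τ(x,y,z) = (−y, x, z+1/2)`, as a bijection
(it is an isometry). -/
def tauE : Equiv.Perm R3 where
  toFun p := (-p.2.1, p.1, p.2.2 + 1/2)
  invFun p := (p.2.1, -p.1, p.2.2 - 1/2)
  left_inv p := by obtain ⟨x, y, z⟩ := p; simp
  right_inv p := by obtain ⟨x, y, z⟩ := p; simp

/-- The half-turn screw motion `ρ_x(x,y,z) = (x+1/2, −y, −z)`, as a bijection
(it is an isometry). -/
def rhoxE : Equiv.Perm R3 where
  toFun p := (p.1 + 1/2, -p.2.1, -p.2.2)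
  invFun p := (p.1 - 1/2, -p.2.1, -p.2.2)
  left_inv p := by obtain ⟨x, y, z⟩ := p; simp
  right_inv p := by obtain ⟨x, y, z⟩ := p; simp

/-- The half-turn screw motion `ρ_y(x,y,z) = (−x, y+1/2, 1−z)`, as a bijection
(it is an isometry). -/
def rhoyE : Equiv.Perm R3 where
  toFun p := (-p.1, p.2.1 + 1/2, 1 - p.2.2)
  invFun p := (-p.1, p.2.1 - 1/2, 1 - p.2.2)
  left_inv p := by obtain ⟨x, y, z⟩ := p; simp
  right_inv p := by obtain ⟨x, y, z⟩ := p; simp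

/-- `Γ_T`, the covering group of the tetracosm Tetra: the group generated by the
translations `T_{(1,0,0)}, T_{(0,1,0)}, T_{(0,0,2)}` and `τ`. -/
def GammaT : Subgroup (Equiv.Perm R3) :=
  Subgroup.closure {transl (1, 0, 0), transl (0, 1, 0), transl (0, 0, 2), tauE}

/-- `Γ_D`, the covering group of the didicosm Didi: the group generated by the
translations `T_{(1,0,0)}, T_{(0,1,0)}, T_{(0,0,2)}` and `ρ_x`, `ρ_y`. -/
def GammaD : Subgroup (Equiv.Perm R3) :=
  Subgroup.closure {transl (1, 0, 0), transl (0, 1, 0), transl (0, 0, 2), rhoxE, rhoyE}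

end

/-- The Euclidean distance between two points of `ℝ³ = ℝ × ℝ × ℝ`. -/
noncomputable def eucDist (p q : R3) : ℝ :=
  Real.sqrt ((q.1 - p.1) ^ 2 + (q.2.1 - p.2.1) ^ 2 + (q.2.2 - p.2.2) ^ 2)

section Aux

open Real

lemma abs_le_eucDist_x (p q : R3) : |q.1 - p.1| ≤ eucDist p q := by
  rw [eucDist, ← Real.sqrt_sq_eq_abs]
  exact Real.sqrt_le_sqrt (by nlinarith [sq_nonneg (q.2.1 - p.2.1), sq_nonneg (q.2.2 - p.2.2)])

lemma abs_le_eucDist_y (p q : R3) : |q.2.1 - p.2.1| ≤ eucDist p q := by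
  rw [eucDist, ← Real.sqrt_sq_eq_abs]
  exact Real.sqrt_le_sqrt (by nlinarith [sq_nonneg (q.1 - p.1), sq_nonneg (q.2.2 - p.2.2)])

lemma abs_le_eucDist_z (p q : R3) : |q.2.2 - p.2.2| ≤ eucDist p q := by
  rw [eucDist, ← Real.sqrt_sq_eq_abs]
  exact Real.sqrt_le_sqrt (by nlinarith [sq_nonneg (q.1 - p.1), sq_nonneg (q.2.1 - p.2.1)])

lemma half_le_abs_int_div_two {n : ℤ} (hn : n ≠ 0) : (1:ℝ)/2 ≤ |(n:ℝ)/2| := by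
  have h1 : (1:ℝ) ≤ |(n:ℝ)| := by exact_mod_cast Int.one_le_abs hn
  rw [abs_div, abs_of_nonneg (by norm_num : (0:ℝ) ≤ 2)]
  linarith

/-- Normal form for elements of `Γ_T`. -/
def PT (γ : Equiv.Perm R3) : Prop :=
  ∃ (A B n : ℤ) (c1 c2 : ℝ),
    ((A = 1 ∧ B = 0 ∧ n % 4 = 0) ∨ (A = 0 ∧ B = 1 ∧ n % 4 = 1) ∨
     (A = -1 ∧ B = 0 ∧ n % 4 = 2) ∨ (A = 0 ∧ B = -1 ∧ n % 4 = 3)) ∧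
    ∀ p : R3, γ p = ((A:ℝ) * p.1 - (B:ℝ) * p.2.1 + c1,
                     (B:ℝ) * p.1 + (A:ℝ) * p.2.1 + c2,
                     p.2.2 + (n:ℝ)/2)

lemma pt_of_mem_GammaT {γ : Equiv.Perm R3} (hγ : γ ∈ GammaT) : PT γ := by
  refine Subgroup.closure_induction ?mem ?one ?mul ?inv hγ
  · intro x hx
    rcases hx with rfl | rfl | rfl | rfl
    · exact ⟨1, 0, 0, 1, 0, by norm_num, fun p => by
        simp [transl, Equiv.coe_addRight, Prod.ext_iff]⟩
    · exact ⟨1, 0, 0, 0, 1, by norm_num, fun p => by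
        simp [transl, Equiv.coe_addRight, Prod.ext_iff]⟩
    · exact ⟨1, 0, 4, 0, 0, by norm_num, fun p => by
        simp [transl, Equiv.coe_addRight, Prod.ext_iff] <;> norm_num⟩
    · exact ⟨0, 1, 1, 0, 0, by norm_num, fun p => by
        simp [tauE, Prod.ext_iff] <;> ring⟩
  · exact ⟨1, 0, 0, 0, 0, by norm_num, fun p => by
      simp [Prod.ext_iff]⟩
  · rintro x y - - ⟨A1, B1, n1, c11, c21, hc1, hf1⟩ ⟨A2, B2, n2, c12, c22, hc2, hf2⟩
    refine ⟨A1*A2 - B1*B2, A1*B2 + B1*A2, n1 + n2,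
      (A1:ℝ)*c12 - (B1:ℝ)*c22 + c11, (B1:ℝ)*c12 + (A1:ℝ)*c22 + c21, ?_, ?_⟩
    · rcases hc1 with ⟨rfl, rfl, h⟩ | ⟨rfl, rfl, h⟩ | ⟨rfl, rfl, h⟩ | ⟨rfl, rfl, h⟩ <;>
      rcases hc2 with ⟨rfl, rfl, h'⟩ | ⟨rfl, rfl, h'⟩ | ⟨rfl, rfl, h'⟩ | ⟨rfl, rfl, h'⟩ <;>
        norm_num <;> omega
    · intro p
      rw [Equiv.Perm.mul_apply, hf2 p, hf1]
      refine Prod.ext ?_ (Prod.ext ?_ ?_) <;> simp only [] <;> push_cast <;> ring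
  · rintro x - ⟨A, B, n, c1, c2, hc, hf⟩
    refine ⟨A, -B, -n, -(A:ℝ)*c1 - (B:ℝ)*c2, (B:ℝ)*c1 - (A:ℝ)*c2, ?_, ?_⟩
    · rcases hc with ⟨rfl, rfl, h⟩ | ⟨rfl, rfl, h⟩ | ⟨rfl, rfl, h⟩ | ⟨rfl, rfl, h⟩ <;>
        norm_num <;> omega
    · have hAB : (A:ℝ)*A + (B:ℝ)*B = 1 := by
        rcases hc with ⟨rfl, rfl, -⟩ | ⟨rfl, rfl, -⟩ | ⟨rfl, rfl, -⟩ | ⟨rfl, rfl, -⟩ <;> norm_num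
      intro p
      rw [Equiv.Perm.inv_def, Equiv.symm_apply_eq, hf]
      obtain ⟨x, y, z⟩ := p
      refine Prod.ext ?_ (Prod.ext ?_ ?_) <;> simp only [] <;> push_cast <;>
        [ (linear_combination (c1 - x) * hAB) ; (linear_combination (c2 - y) * hAB) ; ring ]

/-- Normal form for elements of `Γ_D`. -/
def PD (γ : Equiv.Perm R3) : Prop :=
  ∃ (a b n1 n2 n3 : ℤ),
    (a = 1 ∨ a = -1) ∧ (b = 1 ∨ b = -1) ∧
    2 * (n1 % 2) = 1 - b ∧ 2 * (n2 % 2) = 1 - a ∧ 2 * (n3 % 2) = 1 - a ∧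
    ∀ p : R3, γ p = ((a:ℝ) * p.1 + (n1:ℝ)/2,
                     (b:ℝ) * p.2.1 + (n2:ℝ)/2,
                     (a:ℝ) * (b:ℝ) * p.2.2 + (n3:ℝ))

lemma pd_of_mem_GammaD {γ : Equiv.Perm R3} (hγ : γ ∈ GammaD) : PD γ := by
  refine Subgroup.closure_induction ?mem ?one ?mul ?inv hγ
  · intro x hx
    rcases hx with rfl | rfl | rfl | rfl | rfl
    · exact ⟨1, 1, 2, 0, 0, by norm_num, by norm_num, by norm_num, by norm_num, by norm_num,
        fun p => by simp [transl, Equiv.coe_addRight, Prod.ext_iff] <;> norm_num⟩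
    · exact ⟨1, 1, 0, 2, 0, by norm_num, by norm_num, by norm_num, by norm_num, by norm_num,
        fun p => by simp [transl, Equiv.coe_addRight, Prod.ext_iff] <;> norm_num⟩
    · exact ⟨1, 1, 0, 0, 2, by norm_num, by norm_num, by norm_num, by norm_num, by norm_num,
        fun p => by simp [transl, Equiv.coe_addRight, Prod.ext_iff] <;> norm_num⟩
    · exact ⟨1, -1, 1, 0, 0, by norm_num, by norm_num, by norm_num, by norm_num, by norm_num,
        fun p => by simp [rhoxE, Prod.ext_iff] <;> norm_num⟩
    · exact ⟨-1, 1, 0, 1, 1, by norm_num, by norm_num, by norm_num, by norm_num, by norm_num,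
        fun p => by simp [rhoyE, Prod.ext_iff] <;> push_cast <;> ring⟩
  · exact ⟨1, 1, 0, 0, 0, by norm_num, by norm_num, by norm_num, by norm_num, by norm_num,
      fun p => by simp [Prod.ext_iff]⟩
  · rintro x y - - ⟨a1, b1, m1, m2, m3, ha1, hb1, h11, h12, h13, hf1⟩
      ⟨a2, b2, k1, k2, k3, ha2, hb2, h21, h22, h23, hf2⟩
    refine ⟨a1*a2, b1*b2, a1*k1 + m1, b1*k2 + m2, a1*b1*k3 + m3, ?_, ?_, ?_, ?_, ?_, ?_⟩
    · rcases ha1 with rfl | rfl <;> rcases ha2 with rfl | rfl <;> norm_num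
    · rcases hb1 with rfl | rfl <;> rcases hb2 with rfl | rfl <;> norm_num
    · rcases ha1 with rfl | rfl <;> rcases hb1 with rfl | rfl <;> omega
    · rcases ha1 with rfl | rfl <;> rcases hb1 with rfl | rfl <;> omega
    · rcases ha1 with rfl | rfl <;> rcases hb1 with rfl | rfl <;> omega
    · intro p
      rw [Equiv.Perm.mul_apply, hf2 p, hf1]
      refine Prod.ext ?_ (Prod.ext ?_ ?_) <;> simp only [] <;> push_cast <;> ring
  · rintro x - ⟨a, b, n1, n2, n3, ha, hb, h1, h2, h3, hf⟩
    refine ⟨a, b, -(a*n1), -(b*n2), -(a*b*n3), ha, hb, ?_, ?_, ?_, ?_⟩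
    · rcases ha with rfl | rfl <;> rcases hb with rfl | rfl <;> omega
    · rcases ha with rfl | rfl <;> rcases hb with rfl | rfl <;> omega
    · rcases ha with rfl | rfl <;> rcases hb with rfl | rfl <;> omega
    · have ha2 : (a:ℝ) * a = 1 := by rcases ha with rfl | rfl <;> norm_num
      have hb2 : (b:ℝ) * b = 1 := by rcases hb with rfl | rfl <;> norm_num
      intro p
      rw [Equiv.Perm.inv_def, Equiv.symm_apply_eq, hf]
      obtain ⟨x, y, z⟩ := p
      refine Prod.ext ?_ (Prod.ext ?_ ?_) <;> simp only [] <;> push_cast <;>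
        [ (linear_combination ((n1:ℝ)/2 - x) * ha2) ;
          (linear_combination ((n2:ℝ)/2 - y) * hb2) ;
          (linear_combination ((n3:ℝ) - z) * ha2 * ((b:ℝ)*b) + ((n3:ℝ) - z) * hb2) ]

end Aux

/-- the shortest twisted geodesics of Tetra and Didi have length 1/2:
every non-translation element of `Γ_T` (resp. `Γ_D`) moves every point of `ℝ³` a
(Euclidean) distance at least 1/2, and equality is attained:
`dist(0, τ(0)) = dist(0, ρ_x(0)) = 1/2`. -/
theorem shortest_twisted_geodesics :
    (∀ γ ∈ GammaT, (¬ ∃ w : R3, γ = transl w) → ∀ p : R3, 1 / 2 ≤ eucDist p (γ p)) ∧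
    (∀ γ ∈ GammaD, (¬ ∃ w : R3, γ = transl w) → ∀ p : R3, 1 / 2 ≤ eucDist p (γ p)) ∧
    eucDist 0 (tauE 0) = 1 / 2 ∧ eucDist 0 (rhoxE 0) = 1 / 2 := by
  have key : ∀ x : ℝ, x = 1/4 → Real.sqrt x = 1/2 := fun x hx => by
    rw [hx, show (1:ℝ)/4 = (1/2)^2 by norm_num, Real.sqrt_sq (by norm_num)]
  refine ⟨?_, ?_, ?_, ?_⟩
  · -- Tetra
    intro γ hγ hnt p
    obtain ⟨A, B, n, c1, c2, hc, hf⟩ := pt_of_mem_GammaT hγ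
    have hn : n ≠ 0 := by
      rcases hc with ⟨rfl, rfl, h⟩ | ⟨rfl, rfl, h⟩ | ⟨rfl, rfl, h⟩ | ⟨rfl, rfl, h⟩
      · exact absurd ⟨(c1, c2, (n:ℝ)/2), Equiv.ext fun q => by
          rw [hf q]; simp [transl, Equiv.coe_addRight, Prod.ext_iff]⟩ hnt
      all_goals omega
    have h2 : (γ p).2.2 - p.2.2 = (n:ℝ)/2 := by simp only [hf p]; ring
    have h3 := abs_le_eucDist_z p (γ p)
    rw [h2] at h3
    exact le_trans (half_le_abs_int_div_two hn) h3
  · -- Didi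
    intro γ hγ hnt p
    obtain ⟨a, b, n1, n2, n3, ha, hb, hp1, hp2, hp3, hf⟩ := pd_of_mem_GammaD hγ
    rcases ha with rfl | rfl <;> rcases hb with rfl | rfl
    · -- a = 1, b = 1 : translation, contradiction
      exact absurd ⟨((n1:ℝ)/2, (n2:ℝ)/2, (n3:ℝ)), Equiv.ext fun q => by
        rw [hf q]; simp [transl, Equiv.coe_addRight, Prod.ext_iff]⟩ hnt
    · -- a = 1, b = -1 : Δx = n1/2 with n1 odd
      have hn : n1 ≠ 0 := by omega
      have h2 : (γ p).1 - p.1 = (n1:ℝ)/2 := by simp only [hf p]; push_cast; ring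
      have h3 := abs_le_eucDist_x p (γ p)
      rw [h2] at h3
      exact le_trans (half_le_abs_int_div_two hn) h3
    · -- a = -1, b = 1 : Δy = n2/2 with n2 odd
      have hn : n2 ≠ 0 := by omega
      have h2 : (γ p).2.1 - p.2.1 = (n2:ℝ)/2 := by simp only [hf p]; push_cast; ring
      have h3 := abs_le_eucDist_y p (γ p)
      rw [h2] at h3
      exact le_trans (half_le_abs_int_div_two hn) h3
    · -- a = -1, b = -1 : Δz = n3 with n3 odd
      have hn : n3 ≠ 0 := by omega
      have h2 : (γ p).2.2 - p.2.2 = (n3:ℝ) := by simp only [hf p]; push_cast; ring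
      have h3 := abs_le_eucDist_z p (γ p)
      rw [h2] at h3
      have h4 : (1:ℝ)/2 ≤ |(n3:ℝ)| := by
        have : (1:ℝ) ≤ |(n3:ℝ)| := by exact_mod_cast Int.one_le_abs hn
        linarith
      exact le_trans h4 h3
  · apply key
    simp [eucDist, tauE]
    norm_num
  · apply key
    simp [eucDist, rhoxE]
    norm_num
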